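/- arXiv:1904.07942 — 10 statements merged into one kernel-verified Lean document; each statement's English description precedes it below -/
import Mathlib

section
/- For any 3×3 doubly stochastic matrix M, there exists a 3×3 doubly stochastic matrix M' such that M(I + Π) = (I + Π)M', where Π is the cyclic permutation matrix on 3 elements. -/
open Matrix

/-- A square real matrix is doubly stochastic if all entries are nonnegative and
every row and column sums to 1. -/
def IsDoublyStochastic {n : ℕ} (M : Matrix (Fin n) (Fin n) ℝ) : Prop :=
  (∀ i j, 0 ≤ M i j) ∧ (∀ i, ∑ j, M i j = 1) ∧ (∀ j, ∑ i, M i j = 1)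

/-- The cyclic permutation matrix with entries `Π i j = δ_{i, j+1 mod n}`. -/
def cyc (n : ℕ) : Matrix (Fin n) (Fin n) ℝ := fun i j => if (i : ℕ) = ((j : ℕ) + 1) % n then 1 else 0

/- For `n = 3` we have `Π + Π² = J - I`, with `J = vecMulVec 1 1` the all-ones matrix, and a doubly stochastic `M`
satisfies `MJ = J = JM`; so `M` commutes with `Π + Π²`. Conjugating by the permutation matrix `Π`,
`M' = Π M Πᵀ` is doubly stochastic and
`(I + Π) M' = (Π + Π²) M Πᵀ = M (Π + Π²) Πᵀ = M (I + Π)`. -/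

theorem mul_one_add_eq_one_add_mul_of_commute {R : Type*} [Semiring R] {M P Q : R}
    (hPQ : P * Q = 1) (hM : Commute M (P + P ^ 2)) : M * (1 + P) = (1 + P) * (P * M * Q) :=
  calc M * (1 + P) = M * (P + P ^ 2) * Q := by
        rw [sq, ← one_add_mul, mul_assoc, mul_assoc, hPQ, mul_one]
    _ = (1 + P) * (P * M * Q) := by
        rw [hM.eq, sq, ← one_add_mul, mul_assoc, mul_assoc, mul_assoc]

theorem Matrix.commute_vecMulVec_one_of_mem_doublyStochastic {R n : Type*} [Fintype n]
    [DecidableEq n] [Semiring R] [PartialOrder R] [IsOrderedRing R] {M : Matrix n n R}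
    (hM : M ∈ doublyStochastic R n) : Commute M (vecMulVec 1 1) := by
  rw [Commute, SemiconjBy, mul_vecMulVec, vecMulVec_mul, mulVec_one_of_mem_doublyStochastic hM,
    one_vecMul_of_mem_doublyStochastic hM]

theorem isDoublyStochastic_iff_mem_doublyStochastic {n : ℕ} {M : Matrix (Fin n) (Fin n) ℝ} :
    IsDoublyStochastic M ↔ M ∈ doublyStochastic ℝ (Fin n) :=
  mem_doublyStochastic_iff_sum.symm

theorem cyc_eq_permMatrix (n : ℕ) : cyc n = (finRotate n)⁻¹.permMatrix ℝ := by
  ext i j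
  have := i.neZero
  have hj : ((j + 1 : Fin n) : ℕ) = (j + 1) % n := by simp [Fin.val_add]
  simp [cyc, PEquiv.toMatrix_apply, Equiv.Perm.inv_def, sub_eq_iff_eq_add, ← hj, Fin.val_inj]

theorem cyc_mem_doublyStochastic (n : ℕ) : cyc n ∈ doublyStochastic ℝ (Fin n) :=
  cyc_eq_permMatrix n ▸ permMatrix_mem_doublyStochastic

theorem cyc_mul_transpose (n : ℕ) : cyc n * (cyc n)ᵀ = 1 := by
  rw [cyc_eq_permMatrix, transpose_permMatrix, ← permMatrix_mul, inv_mul_cancel, permMatrix_one]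

theorem cyc_three : cyc 3 = !![0, 0, 1; 1, 0, 0; 0, 1, 0] := by
  ext i j
  fin_cases i <;> fin_cases j <;> rfl

theorem cyc_three_add_sq : cyc 3 + cyc 3 ^ 2 = vecMulVec 1 1 - 1 := by
  rw [cyc_three, sq, mul_fin_three, one_fin_three, eta_fin_three (vecMulVec 1 1)]
  simp [vecMulVec_apply]

/-- For any 3×3 doubly stochastic matrix `M` there exists a 3×3 doubly stochastic
matrix `M'` with `M (I + Π) = (I + Π) M'`. -/
theorem stmt0 (M : Matrix (Fin 3) (Fin 3) ℝ) (hM : IsDoublyStochastic M) :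
    ∃ M' : Matrix (Fin 3) (Fin 3) ℝ, IsDoublyStochastic M' ∧
      M * (1 + cyc 3) = (1 + cyc 3) * M' := by
  rw [isDoublyStochastic_iff_mem_doublyStochastic] at hM
  have hP := cyc_mem_doublyStochastic 3
  refine ⟨cyc 3 * M * (cyc 3)ᵀ, isDoublyStochastic_iff_mem_doublyStochastic.2 ?_,
    mul_one_add_eq_one_add_mul_of_commute (cyc_mul_transpose 3) ?_⟩
  · exact mul_mem (mul_mem hP hM) (transpose_mem_doublyStochastic_iff.2 hP)
  · rw [cyc_three_add_sq]
    exact (commute_vecMulVec_one_of_mem_doublyStochastic hM).sub_right (Commute.one_right M)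
end

section
/- There exists a 4×4 doubly stochastic matrix M (in fact a permutation matrix) such that no 4×4 doubly stochastic matrix M' satisfies M(I + Π) = (I + Π)M', where Π is the cyclic permutation on 4 elements. -/
open Matrix

/-!
For even `n` the alternating vector `u = (1, -1, 1, -1, …)` is a left null vector of `1 + Π`,
since `Π` shifts indices by one and so flips the sign of every entry of `u`. Hence `u` annihilates
every `(1 + Π) M'`, and `M (1 + Π) = (1 + Π) M'` forces `u M (1 + Π) = 0`. For the permutation
matrix `M` of the witness, `u M = (1, 1, -1, -1)`, and the `0`-th entry of `u M (1 + Π)` is `2`.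
-/

theorem isDoublyStochastic_permMatrix {n : ℕ} (σ : Equiv.Perm (Fin n)) :
    IsDoublyStochastic (σ.permMatrix ℝ) :=
  mem_doublyStochastic_iff_sum.mp permMatrix_mem_doublyStochastic

theorem val_finRotate {n : ℕ} (i : Fin n) : (finRotate n i : ℕ) = ((i : ℕ) + 1) % n := by
  cases n with
  | zero => exact i.elim0
  | succ m =>
    rw [coe_finRotate]
    split_ifs with h
    · simp [h]
    · exact (Nat.mod_eq_of_lt (Nat.succ_lt_succ (Fin.val_lt_last h))).symm

theorem cyc_eq_permMatrix_s1 (n : ℕ) : cyc n = Equiv.Perm.permMatrix ℝ (finRotate n).symm := by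
  ext i j
  simp only [cyc, PEquiv.toMatrix_apply, Equiv.toPEquiv_apply, Option.mem_def, Option.some.injEq,
    Equiv.symm_apply_eq, ← val_finRotate, Fin.val_inj]

theorem vecMul_one_add_cyc {n : ℕ} (v : Fin n → ℝ) : v ᵥ* (1 + cyc n) = v + v ∘ finRotate n := by
  rw [vecMul_add, vecMul_one, cyc_eq_permMatrix_s1, vecMul_permMatrix, Equiv.symm_symm]

def alternatingSigns (n : ℕ) : Fin n → ℝ := fun i => (-1) ^ (i : ℕ)

theorem alternatingSigns_finRotate {n : ℕ} (hn : Even n) (i : Fin n) :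
    alternatingSigns n (finRotate n i) = -alternatingSigns n i := by
  cases n with
  | zero => exact i.elim0
  | succ m =>
    have hm : Odd m := by simpa [Nat.even_add_one] using hn
    simp only [alternatingSigns, coe_finRotate]
    split_ifs with h
    · simp [h, hm.neg_one_pow]
    · rw [pow_succ, mul_neg_one]

theorem alternatingSigns_vecMul_one_add_cyc {n : ℕ} (hn : Even n) :
    alternatingSigns n ᵥ* (1 + cyc n) = 0 := by
  ext i
  rw [vecMul_one_add_cyc, Pi.add_apply, Function.comp_apply, alternatingSigns_finRotate hn,
    add_neg_cancel, Pi.zero_apply]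

def witnessPerm : Equiv.Perm (Fin 4) :=
  ⟨![0, 2, 3, 1], ![0, 3, 1, 2], by decide, by decide⟩

theorem alternatingSigns_vecMul_witness_mul_ne_zero :
    alternatingSigns 4 ᵥ* (witnessPerm⁻¹.permMatrix ℝ * (1 + cyc 4)) ≠ 0 := by
  rw [← vecMul_vecMul, vecMul_permMatrix, Equiv.Perm.inv_def, Equiv.symm_symm, vecMul_one_add_cyc]
  intro h
  have h0 := congrFun h 0
  norm_num [alternatingSigns, witnessPerm, finRotate_apply] at h0

/-- There is a 4×4 doubly stochastic matrix `M` (in fact a permutation matrix)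
such that no doubly stochastic `M'` satisfies `M (I + Π) = (I + Π) M'`. -/
theorem stmt1 :
    ∃ M : Matrix (Fin 4) (Fin 4) ℝ,
      IsDoublyStochastic M ∧
      (∃ σ : Equiv.Perm (Fin 4), ∀ i j, M i j = if σ j = i then 1 else 0) ∧
      ¬ ∃ M' : Matrix (Fin 4) (Fin 4) ℝ, IsDoublyStochastic M' ∧
          M * (1 + cyc 4) = (1 + cyc 4) * M' := by
  refine ⟨witnessPerm⁻¹.permMatrix ℝ, isDoublyStochastic_permMatrix _,
    ⟨witnessPerm, fun i j => ?_⟩, ?_⟩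
  · simp only [PEquiv.toMatrix_apply, Equiv.toPEquiv_apply, Option.mem_def, Option.some.injEq,
      Equiv.Perm.inv_eq_iff_eq, @eq_comm _ i]
  · rintro ⟨M', -, h⟩
    apply alternatingSigns_vecMul_witness_mul_ne_zero
    rw [h, ← vecMul_vecMul, alternatingSigns_vecMul_one_add_cyc (by decide), zero_vecMul]
end

section
/- There exists a 4×4 doubly stochastic matrix M and a nonnegative vector v ∈ ℝ^4 such that no 4×4 doubly stochastic matrix M' (possibly depending on v) satisfies M(I + Π)v = (I + Π)M' v, where Π is the cyclic permutation matrix on 4 elements. -/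
/-!
Take `v = e₀` and `M` the permutation matrix swapping `e₁` and `e₂`, so that
`M (I + Π) v = e₀ + e₂`. On the other side, `(I + Π) M' v = (I + Π) w` with `w = M' e₀ ≥ 0`,
and `((I + Π) w)ᵢ = wᵢ + wᵢ₋₁`. The vanishing entries `1` and `3` force `w = 0`, which
contradicts entry `0` being `1`.
-/

open Matrix

theorem cyc_eq_permMatrix_s2 (n : ℕ) [NeZero n] :
    cyc n = Equiv.Perm.permMatrix ℝ (Equiv.subRight (1 : Fin n)) := by
  ext i j
  have h : (i : ℕ) = ((j : ℕ) + 1) % n ↔ i - 1 = j := by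
    rw [sub_eq_iff_eq_add, Fin.ext_iff, Fin.val_add, Fin.val_one', Nat.add_mod_mod]
  simp [cyc, h]

theorem one_add_cyc_mulVec_apply {n : ℕ} [NeZero n] (w : Fin n → ℝ) (i : Fin n) :
    ((1 + cyc n) *ᵥ w) i = w i + w (i - 1) := by
  rw [add_mulVec, one_mulVec, cyc_eq_permMatrix_s2, permMatrix_mulVec]
  rfl

/-- There exist a 4×4 doubly stochastic matrix `M` and a nonnegative vector `v`
such that no doubly stochastic `M'` satisfies `M (I + Π) v = (I + Π) M' v`. -/
theorem stmt2 :
    ∃ (M : Matrix (Fin 4) (Fin 4) ℝ) (v : Fin 4 → ℝ),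
      IsDoublyStochastic M ∧ (∀ i, 0 ≤ v i) ∧
      ¬ ∃ M' : Matrix (Fin 4) (Fin 4) ℝ, IsDoublyStochastic M' ∧
          (M * (1 + cyc 4)).mulVec v = ((1 + cyc 4) * M').mulVec v := by
  refine ⟨(Equiv.swap 1 2 : Equiv.Perm (Fin 4)).permMatrix ℝ, Pi.single 0 1,
    isDoublyStochastic_iff_mem_doublyStochastic.2 permMatrix_mem_doublyStochastic,
    (Pi.single_nonneg.2 zero_le_one : (0 : Fin 4 → ℝ) ≤ Pi.single 0 1), ?_⟩
  rintro ⟨M', ⟨hM', -, -⟩, heq⟩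
  set e : Fin 4 → ℝ := Pi.single 0 1
  have hentry : ∀ i, M' i 0 + M' (i - 1) 0 = e (Equiv.swap 1 2 i) + e (Equiv.swap 1 2 i - 1) := by
    intro i
    have h := congrFun heq i
    rw [← mulVec_mulVec, ← mulVec_mulVec, permMatrix_mulVec, Function.comp_apply,
      one_add_cyc_mulVec_apply, one_add_cyc_mulVec_apply, mulVec_single_one] at h
    exact h.symm
  have h0 : M' 0 0 + M' 3 0 = 1 := by
    simpa [e, Equiv.swap_apply_of_ne_of_ne, show (-1 : Fin 4) = 3 from rfl] using hentry 0
  have h1 : M' 1 0 + M' 0 0 = 0 := by simpa [e] using hentry 1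
  have h3 : M' 3 0 + M' 2 0 = 0 := by simpa [e, Equiv.swap_apply_of_ne_of_ne] using hentry 3
  linarith [hM' 0 0, hM' 1 0, hM' 2 0, hM' 3 0]
end

section
/- For a d-dimensional Hamiltonian with energies E_0 ≤ E_1 ≤ ... ≤ E_{d-1} and thermal probabilities p_i(β) = e^{-β E_i}/Z(β) with Z(β) = Σ_i e^{-β E_i}, the function g(β) = Σ_i p_i(β)^2 is nondecreasing in β; equivalently, for β' ≤ β one has Σ_i p_i(β')^2 ≤ Σ_i p_i(β)^2. -/
/-!
Write `exp (-β E_i) = t_i s_i` with `t_i = exp (-β' E_i)` and `s_i = exp (-(β - β') E_i)`.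
For `0 ≤ β' ≤ β` both `t` and `s` decrease along the energies, so they are similarly ordered,
and the purity inequality `(∑ t²)(∑ t s)² ≤ (∑ (t s)²)(∑ t)²` follows from two applications of
Chebyshev's sum inequality weighted by `t`: once with the pair `(t, s)`, once with `(t s, s)`.
-/

open Real Finset

variable {ι : Type*} [Fintype ι]

theorem Monovary.sum_mul_sum_le_sum_mul_sum_of_nonneg {w f g : ι → ℝ} (hw : ∀ i, 0 ≤ w i)
    (hfg : Monovary f g) :
    (∑ i, w i * f i) * (∑ i, w i * g i) ≤ (∑ i, w i) * ∑ i, w i * f i * g i := by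
  have hpairs : 0 ≤ ∑ i, ∑ j, w i * w j * ((f j - f i) * (g j - g i)) :=
    sum_nonneg fun i _ => sum_nonneg fun j _ =>
      mul_nonneg (mul_nonneg (hw i) (hw j)) (hfg.sub_mul_sub_nonneg i j)
  have hexpand : ∑ i, ∑ j, w i * w j * ((f j - f i) * (g j - g i))
      = (∑ i, w i) * (∑ i, w i * f i * g i) - (∑ i, w i * g i) * (∑ i, w i * f i)
        - (∑ i, w i * f i) * (∑ i, w i * g i) + (∑ i, w i * f i * g i) * (∑ i, w i) := by
    simp only [sum_mul_sum, ← sum_sub_distrib, ← sum_add_distrib]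
    exact sum_congr rfl fun i _ => sum_congr rfl fun j _ => by ring
  linarith

theorem sum_sq_mul_sq_sum_mul_le_of_monovary {t s : ι → ℝ} (ht : 0 ≤ t) (hs : 0 ≤ s) (hts : Monovary t s) :
    (∑ i, t i ^ 2) * (∑ i, t i * s i) ^ 2 ≤ (∑ i, (t i * s i) ^ 2) * (∑ i, t i) ^ 2 := by
  have hfirst := hts.sum_mul_sum_le_sum_mul_sum_of_nonneg ht
  have hsecond := (hts.mul_left₀ ht hs (monovary_self s)).sum_mul_sum_le_sum_mul_sum_of_nonneg ht
  simp only [Pi.mul_apply] at hfirst hsecond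
  have hT : 0 ≤ ∑ i, t i := sum_nonneg fun i _ => ht i
  have hTS : 0 ≤ ∑ i, t i * s i := sum_nonneg fun i _ => mul_nonneg (ht i) (hs i)
  calc (∑ i, t i ^ 2) * (∑ i, t i * s i) ^ 2
      = (∑ i, t i * t i) * (∑ i, t i * s i) * ∑ i, t i * s i := by simp only [sq]; ring
    _ ≤ (∑ i, t i) * (∑ i, t i * t i * s i) * ∑ i, t i * s i := by gcongr
    _ = (∑ i, t i) * ((∑ i, t i * (t i * s i)) * ∑ i, t i * s i) := by
        simp only [mul_assoc]
    _ ≤ (∑ i, t i) * ((∑ i, t i) * ∑ i, t i * (t i * s i) * s i) := by gcongr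
    _ = (∑ i, (t i * s i) ^ 2) * (∑ i, t i) ^ 2 := by
        rw [show ∑ i, t i * (t i * s i) * s i = ∑ i, (t i * s i) ^ 2 from
          sum_congr rfl fun i _ => by ring]
        ring

theorem sum_div_sum_sq_le_of_monovary {t s : ι → ℝ} (ht : ∀ i, 0 < t i) (hs : ∀ i, 0 < s i)
    (hts : Monovary t s) :
    ∑ i, (t i / ∑ j, t j) ^ 2 ≤ ∑ i, (t i * s i / ∑ j, t j * s j) ^ 2 := by
  rcases isEmpty_or_nonempty ι with hι | hι
  · simp
  simp only [div_pow, ← sum_div]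
  rw [div_le_div_iff₀ (by positivity [sum_pos (fun i _ => ht i) univ_nonempty])
    (by positivity [sum_pos (fun i _ => mul_pos (ht i) (hs i)) univ_nonempty])]
  exact sum_sq_mul_sq_sum_mul_le_of_monovary (fun i => (ht i).le) (fun i => (hs i).le) hts

theorem stmt3_general (d : ℕ) (E : Fin d → ℝ) (hE : Monotone E)
    (β' β : ℝ) (hβ' : 0 ≤ β') (hββ' : β' ≤ β) :
    ∑ i, (Real.exp (-β' * E i) / ∑ j, Real.exp (-β' * E j)) ^ 2
      ≤ ∑ i, (Real.exp (-β * E i) / ∑ j, Real.exp (-β * E j)) ^ 2 := by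
  have hsplit : ∀ i, exp (-β * E i) = exp (-β' * E i) * exp (-(β - β') * E i) := fun i => by
    rw [← exp_add]; ring_nf
  have hboltzmann_antitone : ∀ b, 0 ≤ b → Antitone fun i => exp (-b * E i) :=
    fun b hb i j hij => exp_le_exp.2 (by nlinarith [hE hij])
  simp only [hsplit]
  exact sum_div_sum_sq_le_of_monovary (fun _ => exp_pos _) (fun _ => exp_pos _)
    ((hboltzmann_antitone β' hβ').monovary (hboltzmann_antitone _ (sub_nonneg.2 hββ')))

/-- For a `d`-dimensional Hamiltonian with nondecreasing energies and thermal
probabilities `p i β = exp (-β * E i) / Z β`, the purity `∑ i, p i β ^ 2`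
is nondecreasing in `β`: for `0 ≤ β' ≤ β` we have
`∑ i, p i β' ^ 2 ≤ ∑ i, p i β ^ 2`. -/
theorem stmt3 (d : ℕ) (hd : 1 ≤ d) (E : Fin d → ℝ) (hE : Monotone E)
    (β' β : ℝ) (hβ' : 0 ≤ β') (hββ' : β' ≤ β) :
    ∑ i, (Real.exp (-β' * E i) / ∑ j, Real.exp (-β' * E j)) ^ 2
      ≤ ∑ i, (Real.exp (-β * E i) / ∑ j, Real.exp (-β * E j)) ^ 2 :=
  stmt3_general d E hE β' β hβ' hββ'
end

section
/- For any finite sequence of real numbers A_0, ..., A_{d-1} and inverse temperatures 0 ≤ β' ≤ β, the Gibbs distribution at β with energies A_j majorises the Gibbs distribution at β': that is, the vector with components e^{-β A_j}/Σ_k e^{-β A_k} majorises the vector with components e^{-β' A_j}/Σ_k e^{-β' A_k}. -/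
/-!
For a fixed size `m`, the best partial sum of either Gibbs vector is taken on a set `t` of `m`
lowest energies, since at nonnegative inverse temperature the weights decrease with the energy.
It then suffices that the Gibbs mass of such a set grows with `β`: for `i ∈ t`, `j ∉ t` and
`β' ≤ β` one has `e^{-β' A_i} e^{-β A_j} ≤ e^{-β A_i} e^{-β' A_j}`, and summing these cross terms
compares `Σ_t p_{β'} = Z_{β'}(t) / Z_{β'}` with `Σ_t p_β = Z_β(t) / Z_β`.
-/

open Real

/-- `u` majorises `w`: for every set of indices, the corresponding partial sum of `w`
is dominated by some partial sum of `u` over equally many indices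
(equivalently, all partial sums of the decreasing rearrangements are ordered),
and the total sums agree. -/
def Majorizes {d : ℕ} (u w : Fin d → ℝ) : Prop :=
  (∀ s : Finset (Fin d), ∃ t : Finset (Fin d), t.card = s.card ∧
      ∑ i ∈ s, w i ≤ ∑ i ∈ t, u i) ∧
  ∑ i, u i = ∑ i, w i

open Finset

namespace Finset

variable {ι : Type*} [DecidableEq ι]

theorem sum_le_sum_of_card_eq_of_forall_notMem_le {M : Type*} [AddCommMonoid M] [LinearOrder M]
    [IsOrderedAddMonoid M] {w : ι → M} {s t : Finset ι} (hcard : #s = #t)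
    (ht : ∀ i ∈ t, ∀ j ∉ t, w j ≤ w i) : ∑ i ∈ s, w i ≤ ∑ i ∈ t, w i := by
  rcases t.eq_empty_or_nonempty with rfl | htne
  · simp [card_eq_zero.1 hcard]
  obtain ⟨i₀, hi₀, hmin⟩ := t.exists_min_image w htne
  calc ∑ i ∈ s, w i ≤ ∑ i ∈ s ∩ t, w i + #(s \ t) • w i₀ := by
        rw [← sum_inter_add_sum_sdiff s t]
        gcongr
        exact sum_le_card_nsmul _ _ _ fun j hj => ht i₀ hi₀ j (mem_sdiff.1 hj).2
    _ = ∑ i ∈ t ∩ s, w i + #(t \ s) • w i₀ := by rw [inter_comm, card_sdiff_comm hcard]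
    _ ≤ ∑ i ∈ t, w i := by
        rw [← sum_inter_add_sum_sdiff t s]
        gcongr
        exact card_nsmul_le_sum _ _ _ fun i hi => hmin i (mem_sdiff.1 hi).1

variable [Fintype ι]

theorem exists_card_eq_forall_le_of_mem_of_notMem {α : Type*} [LinearOrder α] (f : ι → α)
    {m : ℕ} (hm : m ≤ Fintype.card ι) :
    ∃ t : Finset ι, #t = m ∧ ∀ i ∈ t, ∀ j ∉ t, f i ≤ f j := by
  induction m with
  | zero => exact ⟨∅, rfl, by simp⟩
  | succ m ih =>
    obtain ⟨t, rfl, ht⟩ := ih (Nat.le_of_succ_le hm)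
    have htc : tᶜ.Nonempty := card_pos.1 (by rw [card_compl]; omega)
    obtain ⟨j₀, hj₀, hmin⟩ := tᶜ.exists_min_image f htc
    have hj₀t : j₀ ∉ t := mem_compl.1 hj₀
    refine ⟨insert j₀ t, card_insert_of_notMem hj₀t, fun i hi j hj => ?_⟩
    rw [mem_insert, not_or] at hj
    rcases mem_insert.1 hi with rfl | hi
    · exact hmin j (mem_compl.2 hj.2)
    · exact ht i hi j hj.2

theorem sum_div_sum_le_sum_div_sum_of_mul_le_mul {f g : ι → ℝ} (t : Finset ι)
    (hf : 0 < ∑ k, f k) (hg : 0 < ∑ k, g k) (h : ∀ i ∈ t, ∀ j ∉ t, f i * g j ≤ g i * f j) :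
    (∑ i ∈ t, f i) / ∑ k, f k ≤ (∑ i ∈ t, g i) / ∑ k, g k := by
  rw [div_le_div_iff₀ hf hg, ← sum_add_sum_compl t f, ← sum_add_sum_compl t g, mul_add, mul_add,
    mul_comm (∑ i ∈ t, f i)]
  have hcross : (∑ i ∈ t, f i) * ∑ j ∈ tᶜ, g j ≤ (∑ i ∈ t, g i) * ∑ j ∈ tᶜ, f j := by
    rw [sum_mul_sum, sum_mul_sum]
    exact sum_le_sum fun i hi => sum_le_sum fun j hj => h i hi j (mem_compl.1 hj)
  linarith

end Finset

section Gibbs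

variable {ι : Type*} [Fintype ι]

noncomputable def gibbs (β : ℝ) (A : ι → ℝ) (j : ι) : ℝ :=
  exp (-β * A j) / ∑ k, exp (-β * A k)

theorem gibbs_le_gibbs_of_le {β : ℝ} (hβ : 0 ≤ β) {A : ι → ℝ} {i j : ι} (h : A i ≤ A j) :
    gibbs β A j ≤ gibbs β A i := by
  unfold gibbs
  gcongr ?_ / _
  exact exp_le_exp.2 (by nlinarith)

variable [Nonempty ι]

theorem sum_exp_neg_mul_pos (β : ℝ) (A : ι → ℝ) : 0 < ∑ k, exp (-β * A k) :=
  sum_pos (fun _ _ => exp_pos _) univ_nonempty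

theorem sum_gibbs (β : ℝ) (A : ι → ℝ) : ∑ j, gibbs β A j = 1 := by
  unfold gibbs
  rw [← sum_div, div_self (sum_exp_neg_mul_pos β A).ne']

theorem sum_gibbs_le_sum_gibbs_of_le {β' β : ℝ} (hββ' : β' ≤ β) {A : ι → ℝ} (t : Finset ι)
    (ht : ∀ i ∈ t, ∀ j ∉ t, A i ≤ A j) :
    ∑ i ∈ t, gibbs β' A i ≤ ∑ i ∈ t, gibbs β A i := by
  classical
  simp only [gibbs, ← sum_div]
  refine sum_div_sum_le_sum_div_sum_of_mul_le_mul t (sum_exp_neg_mul_pos β' A)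
    (sum_exp_neg_mul_pos β A) fun i hi j hj => ?_
  rw [← exp_add, ← exp_add, exp_le_exp]
  nlinarith [ht i hi j hj]

end Gibbs

/-- For any finite list of energies `A` and inverse temperatures `0 ≤ β' ≤ β`,
the Gibbs distribution at `β` majorises the Gibbs distribution at `β'`. -/
theorem stmt4 (d : ℕ) (hd : 0 < d) (A : Fin d → ℝ) (β' β : ℝ)
    (hβ' : 0 ≤ β') (hββ' : β' ≤ β) :
    Majorizes (fun j => Real.exp (-β * A j) / ∑ k, Real.exp (-β * A k))
      (fun j => Real.exp (-β' * A j) / ∑ k, Real.exp (-β' * A k)) := by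
  have : Nonempty (Fin d) := ⟨⟨0, hd⟩⟩
  change Majorizes (gibbs β A) (gibbs β' A)
  refine ⟨fun s => ?_, by rw [sum_gibbs, sum_gibbs]⟩
  obtain ⟨t, hts, ht⟩ := exists_card_eq_forall_le_of_mem_of_notMem A s.card_le_univ
  refine ⟨t, hts, ?_⟩
  calc ∑ i ∈ s, gibbs β' A i ≤ ∑ i ∈ t, gibbs β' A i :=
        sum_le_sum_of_card_eq_of_forall_notMem_le hts.symm fun i hi j hj =>
          gibbs_le_gibbs_of_le hβ' (ht i hi j hj)
    _ ≤ ∑ i ∈ t, gibbs β A i := sum_gibbs_le_sum_gibbs_of_le hββ' t ht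
end

section
/- For d = 3 with energies 0 = E_0 ≤ E_1 ≤ E_2 and thermal probabilities p_i = e^{-β E_i}/Z, the inequality e^{-βE_1} + 2e^{-β(E_1+E_2)} + e^{-βE_2} ≥ (e^{-βE_1} + e^{-βE_2})(e^{-2βE_1} + e^{-2βE_2}) holds for all β ≥ 0. -/
open Real

/-! With `a = e^{-βE₁}` and `b = e^{-βE₂}`, both in `[0, 1]`, the two sides differ by
`(1 + a + b) (a (1 - a) + b (1 - b)) ≥ 0`. -/

theorem add_mul_sq_add_sq_le_add_two_mul_add {R : Type*} [CommRing R] [PartialOrder R]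
    [IsOrderedRing R] {a b : R} (ha₀ : 0 ≤ a) (ha₁ : a ≤ 1) (hb₀ : 0 ≤ b) (hb₁ : b ≤ 1) :
    (a + b) * (a ^ 2 + b ^ 2) ≤ a + 2 * (a * b) + b := by
  have key : a + 2 * (a * b) + b - (a + b) * (a ^ 2 + b ^ 2) =
      (1 + a + b) * (a * (1 - a) + b * (1 - b)) := by ring
  rw [← sub_nonneg, key]
  exact mul_nonneg (add_nonneg (add_nonneg zero_le_one ha₀) hb₀)
    (add_nonneg (mul_nonneg ha₀ (sub_nonneg.2 ha₁)) (mul_nonneg hb₀ (sub_nonneg.2 hb₁)))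

theorem exp_neg_mul_le_one {β E : ℝ} (hβ : 0 ≤ β) (hE : 0 ≤ E) : exp (-β * E) ≤ 1 :=
  exp_le_one_iff.2 (by rw [neg_mul, neg_nonpos]; exact mul_nonneg hβ hE)

/-- For `β ≥ 0` and `0 ≤ E₁ ≤ E₂`:
`e^{-βE₁} + 2 e^{-β(E₁+E₂)} + e^{-βE₂} ≥ (e^{-βE₁} + e^{-βE₂})(e^{-2βE₁} + e^{-2βE₂})`. -/
theorem stmt5 (β E₁ E₂ : ℝ) (hβ : 0 ≤ β) (h1 : 0 ≤ E₁) (h12 : E₁ ≤ E₂) :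
    (Real.exp (-β * E₁) + Real.exp (-β * E₂)) *
        (Real.exp (-2 * β * E₁) + Real.exp (-2 * β * E₂))
      ≤ Real.exp (-β * E₁) + 2 * Real.exp (-β * (E₁ + E₂)) + Real.exp (-β * E₂) := by
  have hsq (E : ℝ) : exp (-2 * β * E) = exp (-β * E) ^ 2 := by
    rw [← exp_nat_mul]; ring_nf
  have hprod : exp (-β * (E₁ + E₂)) = exp (-β * E₁) * exp (-β * E₂) := by
    rw [← exp_add]; ring_nf
  rw [hsq, hsq, hprod]
  exact add_mul_sq_add_sq_le_add_two_mul_add (exp_pos _).le (exp_neg_mul_le_one hβ h1)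
    (exp_pos _).le (exp_neg_mul_le_one hβ (h1.trans h12))
end

section
/- For d = 3 with energies 0 ≤ E_1 ≤ E_2, the function β ↦ (e^{-βE_2} + e^{-β(E_1+E_2)}) / (2(e^{-βE_1} + e^{-β(E_1+E_2)} + e^{-βE_2})) is nonincreasing on [0,∞). -/
open Real

/-
Dividing numerator and denominator by `e^{-βE₁}` writes the function as `g / (2 (1 + g))` with
`g β = e^{-β(E₂-E₁)} + e^{-βE₂}`. Since `E₂ - E₁ ≥ 0` and `E₂ ≥ 0`, `g` is antitone, while
`t ↦ t / (2 (1 + t))` is monotone for `t ≥ 0`.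
-/

lemma antitone_exp_neg_mul {E : ℝ} (hE : 0 ≤ E) : Antitone fun β : ℝ => exp (-β * E) :=
  fun _ _ hxy => exp_le_exp.2 (mul_le_mul_of_nonneg_right (neg_le_neg hxy) hE)

lemma monotoneOn_div_two_mul_one_add : MonotoneOn (fun t : ℝ => t / (2 * (1 + t))) (Set.Ici 0) := by
  intro s hs t ht hst
  simp only [Set.mem_Ici] at hs ht
  rw [div_le_div_iff₀ (by positivity) (by positivity)]
  nlinarith

lemma div_two_mul_add_add_eq {a b c : ℝ} (ha : a ≠ 0) :
    (b + c) / (2 * (a + b + c)) = (b / a + c / a) / (2 * (1 + (b / a + c / a))) := by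
  rw [← add_div, one_add_div ha, ← mul_div_assoc, div_div_div_cancel_right₀ ha, add_assoc]

/-- For `0 ≤ E₁ ≤ E₂`, the function
`β ↦ (e^{-βE₂} + e^{-β(E₁+E₂)}) / (2(e^{-βE₁} + e^{-β(E₁+E₂)} + e^{-βE₂}))`
is nonincreasing on `[0,∞)`. -/
theorem stmt8 (E₁ E₂ : ℝ) (h1 : 0 ≤ E₁) (h12 : E₁ ≤ E₂) :
    AntitoneOn
      (fun β : ℝ => (Real.exp (-β * E₂) + Real.exp (-β * (E₁ + E₂))) /
        (2 * (Real.exp (-β * E₁) + Real.exp (-β * (E₁ + E₂)) + Real.exp (-β * E₂))))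
      (Set.Ici 0) := by
  set g : ℝ → ℝ := fun β => exp (-β * (E₂ - E₁)) + exp (-β * E₂) with hg_def
  have hg : Antitone g :=
    (antitone_exp_neg_mul (sub_nonneg.2 h12)).add (antitone_exp_neg_mul (h1.trans h12))
  have hg_nonneg (β : ℝ) : 0 ≤ g β := by positivity
  have h_eq (β : ℝ) : (exp (-β * E₂) + exp (-β * (E₁ + E₂))) /
      (2 * (exp (-β * E₁) + exp (-β * (E₁ + E₂)) + exp (-β * E₂))) = g β / (2 * (1 + g β)) := by
    rw [add_right_comm, div_two_mul_add_add_eq (exp_pos _).ne', hg_def,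
      ← exp_sub, ← exp_sub]
    ring_nf
  intro x _ y _ hxy
  simp only [h_eq]
  exact monotoneOn_div_two_mul_one_add (hg_nonneg y) (hg_nonneg x) (hg hxy)
end

section
/- For a 4-level system with energies 0 = E_0 ≤ E_1 ≤ E_2 ≤ E_3 satisfying decreasing gaps E_1 - E_0 ≥ E_2 - E_1 ≥ E_3 - E_2, the quantity ‖r_2(β)‖ = p_0p_2 + p_1p_3 + p_2p_0 + p_3p_1 = 2(p_0p_2 + p_1p_3) with p_i = e^{-βE_i}/Z(β) is nonincreasing in β. -/
open Real

/-- Thermal probability for a 4-level system with energies `0, E₁, E₂, E₃` at inverse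
temperature `b`: `p4 E₁ E₂ E₃ b e = e^{-b e} / Z(b)`. -/
noncomputable def p4 (E₁ E₂ E₃ b e : ℝ) : ℝ :=
  Real.exp (-b * e) /
    (Real.exp (-b * 0) + Real.exp (-b * E₁) + Real.exp (-b * E₂) + Real.exp (-b * E₃))

/-!
Write `a, b, c` for the Boltzmann weights `e^{-βE₁}, e^{-βE₂}, e^{-βE₃}`, so that
`‖r₂‖ = 2(b + ac)/Z²` with `Z = 1 + a + b + c`. Its logarithmic derivative is the mean energy
`2⟨E⟩` of two independent samples minus the mean energy of the pairs `(0,2), (1,3)` that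
`‖r₂‖` counts. For fixed weights the difference of the two means, cleared of denominators,
is linear in the energies, and the energies allowed by the decreasing gaps form the cone
spanned by the spectra `(1,1,1), (1,2,2), (1,2,3)`; on each of these it is a polynomial
inequality in `a, b, c`, using only `c ≤ b ≤ a ≤ 1` and the log-concavity `b² ≤ ac` coming
from `E₁ + E₃ ≤ 2E₂`.
-/

noncomputable def partitionFunction (E₁ E₂ E₃ β : ℝ) : ℝ :=
  1 + exp (-(β * E₁)) + exp (-(β * E₂)) + exp (-(β * E₃))

noncomputable def pairWeight (E₁ E₂ E₃ β : ℝ) : ℝ :=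
  exp (-(β * E₂)) + exp (-(β * E₁)) * exp (-(β * E₃))

noncomputable def pairCorrelation (E₁ E₂ E₃ β : ℝ) : ℝ :=
  2 * pairWeight E₁ E₂ E₃ β / partitionFunction E₁ E₂ E₃ β ^ 2

/-- `Z · N · (⟨E⟩_pairs − 2⟨E⟩)` for the weights `a, b, c`, with `N = b + ac`. -/
def pairGap (a b c E₁ E₂ E₃ : ℝ) : ℝ :=
  (E₂ * b + (E₁ + E₃) * (a * c)) * (1 + a + b + c)
    - 2 * (b + a * c) * (E₁ * a + E₂ * b + E₃ * c)

lemma pairGap_eq (a b c E₁ E₂ E₃ : ℝ) :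
    pairGap a b c E₁ E₂ E₃ = (E₁ - (E₂ - E₁)) * pairGap a b c 1 1 1
      + ((E₂ - E₁) - (E₃ - E₂)) * pairGap a b c 1 2 2 + (E₃ - E₂) * pairGap a b c 1 2 3 := by
  unfold pairGap; ring

lemma pairGap_one_one_one_nonneg {a b c : ℝ} (hc : 0 ≤ c) (hcb : c ≤ b) (hba : b ≤ a)
    (ha : a ≤ 1) (hbc : b * b ≤ a * c) : 0 ≤ pairGap a b c 1 1 1 := by
  unfold pairGap
  nlinarith [mul_nonneg (hc.trans hcb) (sub_nonneg.2 ha), mul_nonneg hc (sub_nonneg.2 hba)]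

lemma pairGap_one_two_two_nonneg {a b c : ℝ} (hc : 0 ≤ c) (hcb : c ≤ b) (hba : b ≤ a)
    (ha : a ≤ 1) : 0 ≤ pairGap a b c 1 2 2 := by
  have hc1 : c ≤ 1 := (hcb.trans hba).trans ha
  have hac : 0 ≤ a * c := mul_nonneg ((hc.trans hcb).trans hba) hc
  unfold pairGap
  nlinarith [mul_nonneg (hc.trans hcb) (sub_nonneg.2 hc1), mul_nonneg hac (sub_nonneg.2 hc1),
    mul_nonneg hac (sub_nonneg.2 hba)]

lemma pairGap_one_two_three_nonneg {a b c : ℝ} (hc : 0 ≤ c) (hcb : c ≤ b) (hba : b ≤ a)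
    (ha : a ≤ 1) : 0 ≤ pairGap a b c 1 2 3 := by
  have hc1 : c ≤ 1 := (hcb.trans hba).trans ha
  have hac : 0 ≤ a * c := mul_nonneg ((hc.trans hcb).trans hba) hc
  unfold pairGap
  nlinarith [mul_nonneg (hc.trans hcb) (sub_nonneg.2 hc1), mul_nonneg hc (sub_nonneg.2 hba),
    mul_nonneg hac (sub_nonneg.2 (hcb.trans hba))]

lemma pairGap_nonneg {a b c E₁ E₂ E₃ : ℝ} (hc : 0 ≤ c) (hcb : c ≤ b) (hba : b ≤ a)
    (ha : a ≤ 1) (hbc : b * b ≤ a * c) (h3 : E₂ ≤ E₃) (hgap1 : E₂ - E₁ ≤ E₁)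
    (hgap2 : E₃ - E₂ ≤ E₂ - E₁) : 0 ≤ pairGap a b c E₁ E₂ E₃ := by
  have := pairGap_one_one_one_nonneg hc hcb hba ha hbc
  have := pairGap_one_two_two_nonneg hc hcb hba ha
  have := pairGap_one_two_three_nonneg hc hcb hba ha
  have : 0 ≤ E₁ - (E₂ - E₁) := by linarith
  have : 0 ≤ (E₂ - E₁) - (E₃ - E₂) := by linarith
  have : 0 ≤ E₃ - E₂ := by linarith
  rw [pairGap_eq]
  positivity

lemma exp_neg_mul_le_exp_neg_mul {β E E' : ℝ} (hβ : 0 ≤ β) (h : E ≤ E') :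
    exp (-(β * E')) ≤ exp (-(β * E)) :=
  exp_le_exp.2 (neg_le_neg (mul_le_mul_of_nonneg_left h hβ))

lemma pairGap_boltzmann_nonneg {E₁ E₂ E₃ β : ℝ} (hβ : 0 ≤ β) (h3 : E₂ ≤ E₃)
    (hgap1 : E₂ - E₁ ≤ E₁) (hgap2 : E₃ - E₂ ≤ E₂ - E₁) :
    0 ≤ pairGap (exp (-(β * E₁))) (exp (-(β * E₂))) (exp (-(β * E₃))) E₁ E₂ E₃ := by
  have h2 : E₁ ≤ E₂ := by linarith
  have h1 : 0 ≤ E₁ := by linarith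
  have hbc : exp (-(β * E₂)) * exp (-(β * E₂)) ≤ exp (-(β * E₁)) * exp (-(β * E₃)) := by
    rw [← exp_add, ← exp_add]
    exact exp_le_exp.2 (by nlinarith [mul_le_mul_of_nonneg_left (by linarith : E₁ + E₃ ≤ 2 * E₂) hβ])
  refine pairGap_nonneg (exp_pos _).le (exp_neg_mul_le_exp_neg_mul hβ h3)
    (exp_neg_mul_le_exp_neg_mul hβ h2) ?_ hbc h3 hgap1 hgap2
  simpa using exp_neg_mul_le_exp_neg_mul hβ h1

lemma hasDerivAt_exp_neg_mul (E β : ℝ) :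
    HasDerivAt (fun β => exp (-(β * E))) (-E * exp (-(β * E))) β :=
  (hasDerivAt_mul_const E).neg.exp.congr_deriv (mul_comm _ _)

lemma hasDerivAt_partitionFunction (E₁ E₂ E₃ β : ℝ) :
    HasDerivAt (partitionFunction E₁ E₂ E₃)
      (-(E₁ * exp (-(β * E₁)) + E₂ * exp (-(β * E₂)) + E₃ * exp (-(β * E₃)))) β :=
  ((((hasDerivAt_const β (1 : ℝ)).add (hasDerivAt_exp_neg_mul E₁ β)).add
    (hasDerivAt_exp_neg_mul E₂ β)).add (hasDerivAt_exp_neg_mul E₃ β)).congr_deriv (by ring)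

lemma hasDerivAt_pairWeight (E₁ E₂ E₃ β : ℝ) :
    HasDerivAt (pairWeight E₁ E₂ E₃)
      (-(E₂ * exp (-(β * E₂)) + (E₁ + E₃) * (exp (-(β * E₁)) * exp (-(β * E₃))))) β :=
  ((hasDerivAt_exp_neg_mul E₂ β).add
    ((hasDerivAt_exp_neg_mul E₁ β).mul (hasDerivAt_exp_neg_mul E₃ β))).congr_deriv (by ring)

lemma hasDerivAt_pairCorrelation (E₁ E₂ E₃ β : ℝ) :
    HasDerivAt (pairCorrelation E₁ E₂ E₃)
      (-2 * pairGap (exp (-(β * E₁))) (exp (-(β * E₂))) (exp (-(β * E₃))) E₁ E₂ E₃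
        / partitionFunction E₁ E₂ E₃ β ^ 3) β := by
  have hZ : partitionFunction E₁ E₂ E₃ β ≠ 0 := by unfold partitionFunction; positivity
  refine (((hasDerivAt_pairWeight E₁ E₂ E₃ β).const_mul 2).div
    ((hasDerivAt_partitionFunction E₁ E₂ E₃ β).pow 2) (pow_ne_zero 2 hZ)).congr_deriv ?_
  simp only [Pi.pow_apply, pairGap, partitionFunction, pairWeight] at hZ ⊢
  field_simp
  ring

lemma antitoneOn_pairCorrelation {E₁ E₂ E₃ : ℝ} (h3 : E₂ ≤ E₃) (hgap1 : E₂ - E₁ ≤ E₁)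
    (hgap2 : E₃ - E₂ ≤ E₂ - E₁) : AntitoneOn (pairCorrelation E₁ E₂ E₃) (Set.Ici 0) := by
  refine antitoneOn_of_hasDerivWithinAt_nonpos (convex_Ici 0)
    (fun β _ => (hasDerivAt_pairCorrelation E₁ E₂ E₃ β).continuousAt.continuousWithinAt)
    (fun β _ => (hasDerivAt_pairCorrelation E₁ E₂ E₃ β).hasDerivWithinAt) fun β hβ => ?_
  rw [interior_Ici] at hβ
  have hZ : 0 < partitionFunction E₁ E₂ E₃ β := by unfold partitionFunction; positivity
  have := pairGap_boltzmann_nonneg hβ.le h3 hgap1 hgap2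
  exact div_nonpos_of_nonpos_of_nonneg (by linarith) (by positivity)

lemma two_mul_p4_pairs_eq_pairCorrelation (E₁ E₂ E₃ β : ℝ) :
    2 * (p4 E₁ E₂ E₃ β 0 * p4 E₁ E₂ E₃ β E₂ + p4 E₁ E₂ E₃ β E₁ * p4 E₁ E₂ E₃ β E₃)
      = pairCorrelation E₁ E₂ E₃ β := by
  have hZ : 0 < partitionFunction E₁ E₂ E₃ β := by unfold partitionFunction; positivity
  simp only [p4, pairCorrelation, partitionFunction, pairWeight, neg_mul, mul_zero, exp_zero]
    at hZ ⊢
  field_simp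

theorem stmt10_general (E₁ E₂ E₃ β' β : ℝ) (h3 : E₂ ≤ E₃)
    (hgap1 : E₂ - E₁ ≤ E₁ - 0) (hgap2 : E₃ - E₂ ≤ E₂ - E₁)
    (hβ' : 0 ≤ β') (hββ' : β' ≤ β) :
    2 * (p4 E₁ E₂ E₃ β 0 * p4 E₁ E₂ E₃ β E₂ + p4 E₁ E₂ E₃ β E₁ * p4 E₁ E₂ E₃ β E₃)
      ≤ 2 * (p4 E₁ E₂ E₃ β' 0 * p4 E₁ E₂ E₃ β' E₂ + p4 E₁ E₂ E₃ β' E₁ * p4 E₁ E₂ E₃ β' E₃) := by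
  rw [two_mul_p4_pairs_eq_pairCorrelation, two_mul_p4_pairs_eq_pairCorrelation]
  rw [sub_zero] at hgap1
  exact antitoneOn_pairCorrelation h3 hgap1 hgap2 hβ' (hβ'.trans hββ') hββ'

/-- For a 4-level system with energies `0 = E₀ ≤ E₁ ≤ E₂ ≤ E₃` satisfying decreasing
gaps `E₁ - 0 ≥ E₂ - E₁ ≥ E₃ - E₂`, the quantity `‖r₂(β)‖ = 2(p₀p₂ + p₁p₃)` is
nonincreasing in `β`. -/
theorem stmt10 (E₁ E₂ E₃ β' β : ℝ) (h1 : 0 ≤ E₁) (h2 : E₁ ≤ E₂) (h3 : E₂ ≤ E₃)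
    (hgap1 : E₂ - E₁ ≤ E₁ - 0) (hgap2 : E₃ - E₂ ≤ E₂ - E₁)
    (hβ' : 0 ≤ β') (hββ' : β' ≤ β) :
    2 * (p4 E₁ E₂ E₃ β 0 * p4 E₁ E₂ E₃ β E₂ + p4 E₁ E₂ E₃ β E₁ * p4 E₁ E₂ E₃ β E₃)
      ≤ 2 * (p4 E₁ E₂ E₃ β' 0 * p4 E₁ E₂ E₃ β' E₂ + p4 E₁ E₂ E₃ β' E₁ * p4 E₁ E₂ E₃ β' E₃) :=
  stmt10_general E₁ E₂ E₃ β' β h3 hgap1 hgap2 hβ' hββ'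
end

section
/- For real energies E_i ≤ E_m ≤ E_{m+1} and β ≥ 0, the inequality (E_{m+1} − E_i)(e^{β(E_m − E_i)} − 1) ≤ (E_m − E_i)(e^{β(E_{m+1} − E_i)} − 1) holds. -/
open Real

/-! After the substitution `s = β (Eₘ − Eᵢ) ≤ t = β (Eₘ₊₁ − Eᵢ)` the inequality reads
`t (eˢ − 1) ≤ s (eᵗ − 1)`, i.e. the slope `(eˣ − 1) / x` of the secant of the convex function
`exp` through `0` is monotone in `x`. -/

theorem ConvexOn.sub_mul_sub_le_sub_mul_sub {𝕜 : Type*} [Field 𝕜] [LinearOrder 𝕜]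
    [IsStrictOrderedRing 𝕜] {D : Set 𝕜} {f : 𝕜 → 𝕜} (hf : ConvexOn 𝕜 D f) {a s t : 𝕜}
    (ha : a ∈ D) (ht : t ∈ D) (has : a ≤ s) (hst : s ≤ t) :
    (t - a) * (f s - f a) ≤ (s - a) * (f t - f a) := by
  rcases has.eq_or_lt with rfl | has
  · simp
  rcases hst.eq_or_lt with rfl | hst
  · exact le_of_eq (by ring)
  linarith [hf.secant_mono_aux1 ha ht has hst]

/-- For real energies `Eᵢ ≤ Eₘ ≤ Eₘ₊₁` and `β ≥ 0`:
`(Eₘ₊₁ − Eᵢ)(e^{β(Eₘ − Eᵢ)} − 1) ≤ (Eₘ − Eᵢ)(e^{β(Eₘ₊₁ − Eᵢ)} − 1)`. -/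
theorem stmt15 (Ei Em Em1 β : ℝ) (h1 : Ei ≤ Em) (h2 : Em ≤ Em1) (hβ : 0 ≤ β) :
    (Em1 - Ei) * (Real.exp (β * (Em - Ei)) - 1)
      ≤ (Em - Ei) * (Real.exp (β * (Em1 - Ei)) - 1) := by
  rcases hβ.eq_or_lt with rfl | hβ
  · simp
  have key := convexOn_exp.sub_mul_sub_le_sub_mul_sub (Set.mem_univ 0)
    (Set.mem_univ (β * (Em1 - Ei))) (by positivity : 0 ≤ β * (Em - Ei))
    (by gcongr : β * (Em - Ei) ≤ β * (Em1 - Ei))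
  simp only [sub_zero, exp_zero, mul_assoc] at key
  exact le_of_mul_le_mul_left key hβ
end

section
/- For d = 5 probabilities p_0 ≥ p_1 ≥ p_2 ≥ p_3 ≥ p_4 ≥ 0 summing to 1 with p_0 + p_1 ≤ 1/2, one has (p_0 − p_1)(1/2 − p_0 − p_1) ≤ p_4(p_0 − p_3) ≤ p_0 p_1 − p_2 p_3. -/
/-! Since the `pᵢ` sum to `1` and `p₂ + p₃ ≤ p₀ + p₁`, the factor `1/2 − p₀ − p₁` is at most `p₄`,
and `p₀ − p₁ ≤ p₀ − p₃`; this gives the left-hand inequality. For the right-hand one,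
`p₀p₁ − p₂p₃ − p₄(p₀ − p₃) = p₀(p₁ − p₄) − p₃(p₂ − p₄)`, and the subtracted product is dominated
factor by factor by the first. -/

theorem mul_sub_le_mul_sub_mul {α : Type*} [CommRing α] [LinearOrder α] [IsStrictOrderedRing α]
    {a b c d e : α} (hda : d ≤ a) (hcb : c ≤ b) (hec : e ≤ c) (hd : 0 ≤ d) :
    e * (a - d) ≤ a * b - c * d := by
  have hdom : d * (c - e) ≤ a * (b - e) :=
    mul_le_mul hda (sub_le_sub_right hcb e) (sub_nonneg.2 hec) (hd.trans hda)
  calc e * (a - d) = a * b - c * d - (a * (b - e) - d * (c - e)) := by ring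
    _ ≤ a * b - c * d := sub_le_self _ (sub_nonneg.2 hdom)

theorem stmt19_general (p₀ p₁ p₂ p₃ p₄ : ℝ) (h01 : p₁ ≤ p₀) (h12 : p₂ ≤ p₁) (h23 : p₃ ≤ p₂)
    (h34 : p₄ ≤ p₃) (h4 : 0 ≤ p₄) (hsum : p₀ + p₁ + p₂ + p₃ + p₄ = 1) :
    (p₀ - p₁) * (1 / 2 - p₀ - p₁) ≤ p₄ * (p₀ - p₃) ∧
    p₄ * (p₀ - p₃) ≤ p₀ * p₁ - p₂ * p₃ := by
  have h30 : p₃ ≤ p₀ := h23.trans (h12.trans h01)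
  refine ⟨?_, mul_sub_le_mul_sub_mul h30 h12 (h34.trans h23) (h4.trans h34)⟩
  have hdefect : 1 / 2 - p₀ - p₁ ≤ p₄ := by linarith
  calc (p₀ - p₁) * (1 / 2 - p₀ - p₁) ≤ (p₀ - p₁) * p₄ :=
        mul_le_mul_of_nonneg_left hdefect (sub_nonneg.2 h01)
    _ ≤ (p₀ - p₃) * p₄ := mul_le_mul_of_nonneg_right (sub_le_sub_left (h23.trans h12) p₀) h4
    _ = p₄ * (p₀ - p₃) := mul_comm _ _

/-- For `d = 5` probabilities `p₀ ≥ p₁ ≥ p₂ ≥ p₃ ≥ p₄ ≥ 0` summing to `1` with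
`p₀ + p₁ ≤ 1/2`:
`(p₀ − p₁)(1/2 − p₀ − p₁) ≤ p₄(p₀ − p₃) ≤ p₀p₁ − p₂p₃`. -/
theorem stmt19 (p₀ p₁ p₂ p₃ p₄ : ℝ) (h01 : p₁ ≤ p₀) (h12 : p₂ ≤ p₁) (h23 : p₃ ≤ p₂)
    (h34 : p₄ ≤ p₃) (h4 : 0 ≤ p₄) (hsum : p₀ + p₁ + p₂ + p₃ + p₄ = 1)
    (hhalf : p₀ + p₁ ≤ 1 / 2) :
    (p₀ - p₁) * (1 / 2 - p₀ - p₁) ≤ p₄ * (p₀ - p₃) ∧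
    p₄ * (p₀ - p₃) ≤ p₀ * p₁ - p₂ * p₃ :=
  stmt19_general p₀ p₁ p₂ p₃ p₄ h01 h12 h23 h34 h4 hsum
end
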